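/- arXiv:1508.02220 — 12 statements merged into one kernel-verified Lean document; each statement's English description precedes it below -/
import Mathlib

section
/- Let (B,C) be a precontact algebra and define a relation R on the set of ultrafilters of B by U₁ R U₂ iff U₁ × U₂ ⊆ C (i.e., aCb for all a ∈ U₁, b ∈ U₂). If I is a set of ultrafilters that is pairwise connected (any two distinct U,V ∈ I satisfy URV or VRU), then the union Γ = ⋃{U : U ∈ I} is a clan of (B,C). -/
variable {B : Type*} [BooleanAlgebra B]

/-- A precontact relation on a Boolean algebra: axioms (C0) and (C+). -/
def IsPrecontact (C : B → B → Prop) : Prop :=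
  (∀ a b, C a b → a ≠ ⊥ ∧ b ≠ ⊥) ∧
  (∀ a b c, C a (b ⊔ c) ↔ (C a b ∨ C a c)) ∧
  (∀ a b c, C (a ⊔ b) c ↔ (C a c ∨ C b c))

/-- The relation C#: a C# b iff aCb or bCa or a·b ≠ 0. -/
def CSharp (C : B → B → Prop) (a b : B) : Prop := C a b ∨ C b a ∨ a ⊓ b ≠ ⊥

/-- An ultrafilter of a Boolean algebra, as a set. -/
def IsUltrafilter (U : Set B) : Prop :=
  ⊥ ∉ U ∧ ⊤ ∈ U ∧ (∀ a b : B, a ∈ U → a ≤ b → b ∈ U) ∧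
  (∀ a b : B, a ∈ U → b ∈ U → a ⊓ b ∈ U) ∧ (∀ a : B, a ∈ U ∨ aᶜ ∈ U)

/-- A clan of a precontact algebra (B,C). -/
def IsClan (C : B → B → Prop) (Γ : Set B) : Prop :=
  Γ.Nonempty ∧ ⊥ ∉ Γ ∧ (∀ a b : B, a ∈ Γ → a ≤ b → b ∈ Γ) ∧
  (∀ a b : B, a ⊔ b ∈ Γ → a ∈ Γ ∨ b ∈ Γ) ∧
  (∀ a b : B, a ∈ Γ → b ∈ Γ → CSharp C a b)

/-- The union of a nonempty set of pairwise connected ultrafilters is a clan. -/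
theorem stmt4 (C : B → B → Prop) (hC : IsPrecontact C)
    (I : Set (Set B)) (hne : I.Nonempty) (hUlt : ∀ U ∈ I, IsUltrafilter U)
    (hconn : ∀ U ∈ I, ∀ V ∈ I, U ≠ V →
      (∀ a ∈ U, ∀ b ∈ V, C a b) ∨ (∀ a ∈ V, ∀ b ∈ U, C a b)) :
    IsClan C (⋃₀ I) := by
  obtain ⟨U0, hU0⟩ := hne
  refine ⟨⟨⊤, U0, hU0, (hUlt U0 hU0).2.1⟩, ?_, ?_, ?_, ?_⟩
  · rintro ⟨U, hU, hbot⟩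
    exact (hUlt U hU).1 hbot
  · rintro a b ⟨U, hU, ha⟩ hab
    exact ⟨U, hU, (hUlt U hU).2.2.1 a b ha hab⟩
  · rintro a b ⟨U, hU, hab⟩
    obtain ⟨_, _, hup, hinf, htot⟩ := hUlt U hU
    rcases htot a with ha | hac
    · exact Or.inl ⟨U, hU, ha⟩
    · refine Or.inr ⟨U, hU, hup _ b (hinf _ _ hab hac) ?_⟩
      rw [inf_sup_right]
      simp
  · rintro a b ⟨U, hU, ha⟩ ⟨V, hV, hb⟩
    by_cases hUV : U = V
    · subst hUV
      obtain ⟨hbot, _, _, hinf, _⟩ := hUlt U hU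
      refine Or.inr (Or.inr fun h => hbot ?_)
      rw [← h]; exact hinf a b ha hb
    · rcases hconn U hU V hV hUV with h | h
      · exact Or.inl (h a ha b hb)
      · exact Or.inr (Or.inl (h b hb a ha))
end

section
/- (Ultrafilter characterization of precontact.) Let (B,C) be a precontact algebra and R the relation on Ult(B) defined by U₁ R U₂ iff U₁ × U₂ ⊆ C. Then for all a,b ∈ B: aCb if and only if there exist ultrafilters U₁, U₂ of B with a ∈ U₁, b ∈ U₂, and U₁ R U₂. -/
variable {B : Type*} [BooleanAlgebra B]

/-- Key extension lemma: from an additive, monotone predicate holding at `a`,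
extract an ultrafilter containing `a` on which the predicate holds. -/
lemma exists_ultrafilter_of_additive (P : B → Prop) (hbot : ¬ P ⊥)
    (hmono : ∀ x y : B, x ≤ y → P x → P y)
    (hadd : ∀ x y : B, P (x ⊔ y) → P x ∨ P y)
    (a : B) (ha : P a) :
    ∃ U : Set B, IsUltrafilter U ∧ a ∈ U ∧ ∀ p ∈ U, P p := by
  classical
  have hIi : Order.IsIdeal {x : B | ¬ P x} := by
    refine ⟨fun x y hyx hx hPy => hx (hmono y x hyx hPy), ⟨⊥, hbot⟩, ?_⟩
    intro x hx y hy
    refine ⟨x ⊔ y, fun h => ?_, le_sup_left, le_sup_right⟩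
    rcases hadd x y h with h | h
    · exact hx h
    · exact hy h
  set I := hIi.toIdeal
  have hdisj : Disjoint ((Order.PFilter.principal a : Order.PFilter B) : Set B)
      ((I : Order.Ideal B) : Set B) := by
    rw [Set.disjoint_left]
    intro x hx hx'
    exact hx' (hmono a x hx ha)
  obtain ⟨J, hJp, hIJ, hJd⟩ := DistribLattice.prime_ideal_of_disjoint_filter_ideal hdisj
  have haJ : a ∉ J := by
    intro h
    exact Set.disjoint_left.mp hJd (by simp [Order.PFilter.mem_principal]) h
  refine ⟨{x : B | x ∉ J}, ⟨?_, ?_, ?_, ?_, ?_⟩, haJ, ?_⟩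
  · simp only [Set.mem_setOf_eq, not_not]
    exact J.bot_mem
  · intro h
    exact haJ (J.lower le_top h)
  · intro x y hx hxy h
    exact hx (J.lower hxy h)
  · intro x y hx hy h
    rcases hJp.mem_or_mem h with h' | h'
    · exact hx h'
    · exact hy h'
  · intro x
    by_contra h
    push_neg at h
    simp only [Set.mem_setOf_eq, not_not] at h
    exact haJ (J.lower le_top (by simpa using Order.Ideal.sup_mem h.1 h.2))
  · intro p hp
    by_contra hPp
    exact hp (hIJ hPp)

/-- Ultrafilter characterization of the precontact relation. -/
theorem stmt5 (C : B → B → Prop) (hC : IsPrecontact C) (a b : B) :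
    C a b ↔ ∃ U V : Set B, IsUltrafilter U ∧ IsUltrafilter V ∧
      a ∈ U ∧ b ∈ V ∧ (∀ p ∈ U, ∀ q ∈ V, C p q) := by
  obtain ⟨hC0, hCr, hCl⟩ := hC
  have hmonoL : ∀ x y z : B, x ≤ y → C x z → C y z := by
    intro x y z hxy h
    have : C (x ⊔ y) z := (hCl x y z).mpr (Or.inl h)
    rwa [sup_of_le_right hxy] at this
  have hmonoR : ∀ x y z : B, x ≤ y → C z x → C z y := by
    intro x y z hxy h
    have : C z (x ⊔ y) := (hCr z x y).mpr (Or.inl h)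
    rwa [sup_of_le_right hxy] at this
  constructor
  · intro hab
    -- first ultrafilter
    obtain ⟨U, hU, haU, hUall⟩ := exists_ultrafilter_of_additive (fun x => C x b)
      (fun h => (hC0 _ _ h).1 rfl)
      (fun x y hxy h => hmonoL x y b hxy h)
      (fun x y h => (hCl x y b).mp h) a hab
    -- second ultrafilter
    obtain ⟨V, hV, hbV, hVall⟩ := exists_ultrafilter_of_additive
      (fun q => ∀ p ∈ U, C p q)
      (by
        intro h
        exact (hC0 ⊤ ⊥ (h ⊤ hU.2.1)).2 rfl)
      (by
        intro x y hxy h p hp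
        exact hmonoR x y p hxy (h p hp))
      (by
        intro x y h
        by_contra hcon
        push_neg at hcon
        obtain ⟨hx, hy⟩ := hcon
        obtain ⟨p₁, hp₁, hp₁x⟩ := hx
        obtain ⟨p₂, hp₂, hp₂y⟩ := hy
        have hpU : p₁ ⊓ p₂ ∈ U := hU.2.2.2.1 p₁ p₂ hp₁ hp₂
        have := h (p₁ ⊓ p₂) hpU
        rcases (hCr (p₁ ⊓ p₂) x y).mp this with h' | h'
        · exact hp₁x (hmonoL (p₁ ⊓ p₂) p₁ x inf_le_left h')
        · exact hp₂y (hmonoL (p₁ ⊓ p₂) p₂ y inf_le_right h'))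
      b (fun p hp => hUall p hp)
    exact ⟨U, V, hU, hV, haU, hbV, fun p hp q hq => hVall q hq p hp⟩
  · rintro ⟨U, V, hU, hV, haU, hbV, h⟩
    exact h a haU b hbV
end

section
/- (Clan characterization of the contact relation C#.) Let (B,C) be a precontact algebra and define a C# b iff (aCb or bCa or a·b ≠ 0). Then for all a,b ∈ B: a C# b if and only if there exists a clan Γ of (B,C) with a ∈ Γ and b ∈ Γ. -/
variable {B : Type*} [BooleanAlgebra B]

lemma exists_ultra (P : B → Prop) (a : B)
    (hmono : ∀ x y : B, x ≤ y → P x → P y)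
    (hsplit : ∀ h x : B, P h → P (h ⊓ x) ∨ P (h ⊓ xᶜ))
    (hbot : ¬ P ⊥) (ha : P a) :
    ∃ U : Set B, IsUltrafilter U ∧ a ∈ U ∧ ∀ u ∈ U, P u := by
  classical
  set S : Set (Set B) :=
    {F | a ∈ F ∧ (∀ x ∈ F, P x) ∧ (∀ x y : B, x ∈ F → x ≤ y → y ∈ F) ∧
      (∀ x y : B, x ∈ F → y ∈ F → x ⊓ y ∈ F)} with hS
  have h0 : {y : B | a ≤ y} ∈ S := by
    refine ⟨le_refl a, fun x hx => hmono a x hx ha, fun x y hx hxy => le_trans hx hxy,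
      fun x y hx hy => le_inf hx hy⟩
  have hchainS : ∀ c ⊆ S, IsChain (· ⊆ ·) c → c.Nonempty →
      ∃ ub ∈ S, ∀ s ∈ c, s ⊆ ub := by
    rintro c hcS hchain ⟨F0, hF0⟩
    refine ⟨⋃₀ c, ⟨⟨F0, hF0, (hcS hF0).1⟩, ?_, ?_, ?_⟩, fun s hs => Set.subset_sUnion_of_mem hs⟩
    · rintro x ⟨F, hF, hx⟩
      exact (hcS hF).2.1 x hx
    · rintro x y ⟨F, hF, hx⟩ hxy
      exact ⟨F, hF, (hcS hF).2.2.1 x y hx hxy⟩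
    · rintro x y ⟨F, hF, hx⟩ ⟨G, hG, hy⟩
      rcases hchain.total hF hG with h | h
      · exact ⟨G, hG, (hcS hG).2.2.2 x y (h hx) hy⟩
      · exact ⟨F, hF, (hcS hF).2.2.2 x y hx (h hy)⟩
  obtain ⟨F, -, hmaxF⟩ := zorn_subset_nonempty S hchainS _ h0
  obtain ⟨haF, hPF, hup, hinf⟩ := hmaxF.prop
  have hbotF : ⊥ ∉ F := fun h => hbot (hPF _ h)
  refine ⟨F, ⟨hbotF, hup a ⊤ haF le_top, hup, hinf, ?_⟩, haF, hPF⟩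
  intro x
  by_contra hcon
  push_neg at hcon
  obtain ⟨hx, hxc⟩ := hcon
  have key : ∀ z : B, z ∉ F → ∃ f ∈ F, ¬ P (f ⊓ z) := by
    intro z hz
    by_contra hcon2
    push_neg at hcon2
    have hFz : {y : B | ∃ f ∈ F, f ⊓ z ≤ y} ∈ S := by
      refine ⟨⟨a, haF, inf_le_left⟩, ?_, ?_, ?_⟩
      · rintro w ⟨f, hf, hfw⟩
        exact hmono _ _ hfw (hcon2 f hf)
      · rintro w y ⟨f, hf, hfw⟩ hwy
        exact ⟨f, hf, le_trans hfw hwy⟩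
      · rintro w y ⟨f, hf, hfw⟩ ⟨g, hg, hgy⟩
        refine ⟨f ⊓ g, hinf f g hf hg, ?_⟩
        calc f ⊓ g ⊓ z ≤ (f ⊓ z) ⊓ (g ⊓ z) :=
              le_inf (inf_le_inf_right z inf_le_left) (inf_le_inf_right z inf_le_right)
          _ ≤ w ⊓ y := inf_le_inf hfw hgy
    have hsub : F ⊆ {y : B | ∃ f ∈ F, f ⊓ z ≤ y} := fun f hf => ⟨f, hf, inf_le_left⟩
    have heq := hmaxF.eq_of_subset hFz hsub
    have hzin : z ∈ F := by
      rw [heq]; exact ⟨a, haF, inf_le_right⟩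
    exact hz hzin
  obtain ⟨f1, hf1, hP1⟩ := key x hx
  obtain ⟨f2, hf2, hP2⟩ := key xᶜ hxc
  have hh : f1 ⊓ f2 ∈ F := hinf _ _ hf1 hf2
  rcases hsplit (f1 ⊓ f2) x (hPF _ hh) with h | h
  · exact hP1 (hmono _ _ (inf_le_inf_right x inf_le_left) h)
  · exact hP2 (hmono _ _ (inf_le_inf_right xᶜ inf_le_right) h)

lemma inf_decomp (h x : B) : h = (h ⊓ x) ⊔ (h ⊓ xᶜ) := by
  rw [← inf_sup_left, sup_compl_eq_top, inf_top_eq]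

lemma ultra_prime (U : Set B) (hU : IsUltrafilter U) (x y : B) (hxy : x ⊔ y ∈ U) :
    x ∈ U ∨ y ∈ U := by
  obtain ⟨hbot, -, hup, hinf, hprime⟩ := hU
  rcases hprime x with hx | hx
  · exact Or.inl hx
  · refine Or.inr (hup _ _ (hinf _ _ hx hxy) ?_)
    calc xᶜ ⊓ (x ⊔ y) = xᶜ ⊓ x ⊔ xᶜ ⊓ y := inf_sup_left _ _ _
      _ = xᶜ ⊓ y := by rw [compl_inf_eq_bot, bot_sup_eq]
      _ ≤ y := inf_le_right

lemma clan_of_C (C : B → B → Prop) (hC : IsPrecontact C) {a b : B} (h : C a b) :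
    ∃ Γ : Set B, IsClan C Γ ∧ a ∈ Γ ∧ b ∈ Γ := by
  obtain ⟨hC0, hCr, hCl⟩ := hC
  have mono1 : ∀ x y z : B, x ≤ y → C x z → C y z := by
    intro x y z hxy h
    have := (hCl x y z).mpr (Or.inl h)
    rwa [sup_eq_right.mpr hxy] at this
  have mono2 : ∀ x y z : B, x ≤ y → C z x → C z y := by
    intro x y z hxy h
    have := (hCr z x y).mpr (Or.inl h)
    rwa [sup_eq_right.mpr hxy] at this
  obtain ⟨U, hU, haU, hUP⟩ := exists_ultra (fun u => C u b) a
    (fun x y hxy hx => mono1 x y b hxy hx)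
    (fun h x hh => by
      have := (hCl (h ⊓ x) (h ⊓ xᶜ) b).mp (by rwa [← inf_decomp])
      exact this)
    (fun hb => (hC0 _ _ hb).1 rfl) h
  obtain ⟨V, hV, hbV, hVP⟩ := exists_ultra (fun v => ∀ u ∈ U, C u v) b
    (fun x y hxy hx u hu => mono2 x y u hxy (hx u hu))
    (fun h x hh => by
      show (∀ u ∈ U, C u (h ⊓ x)) ∨ (∀ u ∈ U, C u (h ⊓ xᶜ))
      by_contra hcon
      push_neg at hcon
      obtain ⟨⟨u1, hu1, h1⟩, ⟨u2, hu2, h2⟩⟩ := hcon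
      have hu : u1 ⊓ u2 ∈ U := hU.2.2.2.1 _ _ hu1 hu2
      have := (hCr (u1 ⊓ u2) (h ⊓ x) (h ⊓ xᶜ)).mp (by rw [← inf_decomp]; exact hh _ hu)
      rcases this with h' | h'
      · exact h1 (mono1 _ _ _ inf_le_left h')
      · exact h2 (mono1 _ _ _ inf_le_right h'))
    (fun hb => (hC0 _ _ (hb a haU)).2 rfl) hUP
  refine ⟨U ∪ V, ⟨⟨a, Or.inl haU⟩, ?_, ?_, ?_, ?_⟩, Or.inl haU, Or.inr hbV⟩
  · rintro (h' | h')
    · exact hU.1 h'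
    · exact hV.1 h'
  · rintro x y (hx | hx) hxy
    · exact Or.inl (hU.2.2.1 x y hx hxy)
    · exact Or.inr (hV.2.2.1 x y hx hxy)
  · rintro x y (hx | hx)
    · rcases ultra_prime U hU x y hx with h' | h'
      · exact Or.inl (Or.inl h')
      · exact Or.inr (Or.inl h')
    · rcases ultra_prime V hV x y hx with h' | h'
      · exact Or.inl (Or.inr h')
      · exact Or.inr (Or.inr h')
  · rintro x y (hx | hx) (hy | hy)
    · exact Or.inr (Or.inr fun hb => hU.1 (hb ▸ hU.2.2.2.1 _ _ hx hy))
    · exact Or.inl (hVP y hy x hx)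
    · exact Or.inr (Or.inl (hVP x hx y hy))
    · exact Or.inr (Or.inr fun hb => hV.1 (hb ▸ hV.2.2.2.1 _ _ hx hy))

/-- Clan characterization of the contact relation C#. -/
theorem stmt6 (C : B → B → Prop) (hC : IsPrecontact C) (a b : B) :
    CSharp C a b ↔ ∃ Γ : Set B, IsClan C Γ ∧ a ∈ Γ ∧ b ∈ Γ := by
  constructor
  · rintro (h | h | h)
    · exact clan_of_C C hC h
    · obtain ⟨Γ, hΓ, hb, ha⟩ := clan_of_C C hC h
      exact ⟨Γ, hΓ, ha, hb⟩
    · obtain ⟨U, hU, habU, hUP⟩ := exists_ultra (fun u => u ≠ ⊥) (a ⊓ b)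
        (fun x y hxy hx hy => hx (le_bot_iff.mp (hy ▸ hxy)))
        (fun h x hh => by
          show h ⊓ x ≠ ⊥ ∨ h ⊓ xᶜ ≠ ⊥
          by_contra hcon
          push_neg at hcon
          exact hh (by rw [inf_decomp h x, hcon.1, hcon.2, sup_idem])
        )
        (fun hb => hb rfl) h
      refine ⟨U, ⟨⟨a ⊓ b, habU⟩, hU.1, hU.2.2.1, ultra_prime U hU, ?_⟩,
        hU.2.2.1 _ _ habU inf_le_left, hU.2.2.1 _ _ habU inf_le_right⟩
      intro x y hx hy
      exact Or.inr (Or.inr (hUP _ (hU.2.2.2.1 _ _ hx hy)))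
  · rintro ⟨Γ, hΓ, ha, hb⟩
    exact hΓ.2.2.2.2 a b ha hb
end

section
/- Let (B,C) be a precontact algebra. The relation R on the ultrafilters of B defined by U₁ R U₂ iff U₁ × U₂ ⊆ C is reflexive if and only if (B,C) satisfies the reflexivity axiom (Cref): a ≠ 0 implies aCa. -/
variable {B : Type*} [BooleanAlgebra B]

/-- Every nonzero element lies in an ultrafilter. -/
lemma exists_ultrafilter_mem (a : B) (ha : a ≠ ⊥) :
    ∃ U : Set B, IsUltrafilter U ∧ a ∈ U := by
  set 𝒮 : Set (Set B) :=
    {S | a ∈ S ∧ ⊥ ∉ S ∧ (∀ x y : B, x ∈ S → x ≤ y → y ∈ S) ∧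
      (∀ x y : B, x ∈ S → y ∈ S → x ⊓ y ∈ S)} with h𝒮
  have hbase : {b : B | a ≤ b} ∈ 𝒮 := by
    refine ⟨le_refl a, fun h => ha (le_bot_iff.mp h), fun x y hx hxy => le_trans hx hxy,
      fun x y hx hy => le_inf hx hy⟩
  have hzorn : ∀ c ⊆ 𝒮, IsChain (· ⊆ ·) c → c.Nonempty →
      ∃ ub ∈ 𝒮, ∀ s ∈ c, s ⊆ ub := by
    intro c hcS hchain hcne
    obtain ⟨S₀, hS₀⟩ := hcne
    refine ⟨⋃₀ c, ⟨Set.mem_sUnion.mpr ⟨S₀, hS₀, (hcS hS₀).1⟩, ?_, ?_, ?_⟩,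
      fun s hs => Set.subset_sUnion_of_mem hs⟩
    · rintro ⟨S, hS, hbS⟩
      exact (hcS hS).2.1 hbS
    · rintro x y ⟨S, hS, hxS⟩ hxy
      exact ⟨S, hS, (hcS hS).2.2.1 x y hxS hxy⟩
    · rintro x y ⟨S, hS, hxS⟩ ⟨T, hT, hyT⟩
      rcases hchain.total hS hT with h | h
      · exact ⟨T, hT, (hcS hT).2.2.2 x y (h hxS) hyT⟩
      · exact ⟨S, hS, (hcS hS).2.2.2 x y hxS (h hyT)⟩
  obtain ⟨U, hsub, hUS, hmax⟩ := zorn_subset_nonempty 𝒮 hzorn _ hbase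
  · have haU : a ∈ U := hUS.1
    have hbotU : ⊥ ∉ U := hUS.2.1
    have hup := hUS.2.2.1
    have hinf := hUS.2.2.2
    have htop : ⊤ ∈ U := hup a ⊤ haU le_top
    refine ⟨U, ⟨hbotU, htop, hup, hinf, ?_⟩, haU⟩
    intro x
    by_cases hxc : xᶜ ∈ U
    · exact Or.inr hxc
    · left
      set U' : Set B := {y | ∃ u ∈ U, u ⊓ x ≤ y} with hU'
      have hU'S : U' ∈ 𝒮 := by
        refine ⟨⟨a, haU, inf_le_left⟩, ?_, ?_, ?_⟩
        · rintro ⟨u, hu, hle⟩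
          exact hxc (hup u xᶜ hu
            ((disjoint_iff.mpr (le_bot_iff.mp hle)).le_compl_right))
        · rintro p q ⟨u, hu, hle⟩ hpq
          exact ⟨u, hu, hle.trans hpq⟩
        · rintro p q ⟨u, hu, hle⟩ ⟨v, hv, hle'⟩
          refine ⟨u ⊓ v, hinf u v hu hv, ?_⟩
          refine le_trans (le_inf (inf_le_inf_right x inf_le_left)
            (inf_le_inf_right x inf_le_right)) (inf_le_inf hle hle')
      have hUU' : U ⊆ U' := fun u hu => ⟨u, hu, inf_le_left⟩
      have : U' = U := subset_antisymm (hmax hU'S hUU') hUU'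
      have hx' : x ∈ U' := ⟨⊤, htop, by simp⟩
      rwa [this] at hx'

/-- The canonical relation R on ultrafilters is reflexive iff (B,C)
satisfies (Cref). -/
theorem stmt7 (C : B → B → Prop) (hC : IsPrecontact C) :
    (∀ U : Set B, IsUltrafilter U → ∀ a ∈ U, ∀ b ∈ U, C a b) ↔
    (∀ a : B, a ≠ ⊥ → C a a) := by
  obtain ⟨h0, hR, hL⟩ := hC
  constructor
  · intro h a ha
    obtain ⟨U, hU, haU⟩ := exists_ultrafilter_mem a ha
    exact h U hU a haU a haU
  · intro href U hU a haU b hbU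
    obtain ⟨hbot, htop, hup, hinf, hcomp⟩ := hU
    have hab : a ⊓ b ∈ U := hinf a b haU hbU
    have hne : a ⊓ b ≠ ⊥ := fun h => hbot (h ▸ hab)
    have h1 : C (a ⊓ b) (a ⊓ b) := href _ hne
    have h2 : C a (a ⊓ b) := by
      have := (hL (a ⊓ b) a (a ⊓ b)).mpr (Or.inl h1)
      rwa [sup_eq_right.mpr inf_le_left] at this
    have := (hR a (a ⊓ b) b).mpr (Or.inl h2)
    rwa [sup_eq_right.mpr inf_le_right] at this
end

section
/- Let (B,C) be a precontact algebra, define a ≪ b iff not(a C b*), and define R on ultrafilters of B by U₁ R U₂ iff U₁ × U₂ ⊆ C. Then R is transitive if and only if (B,C) satisfies the transitivity axiom (Ctr): a ≪ c implies there exists b with a ≪ b and b ≪ c. -/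
variable {B : Type*} [BooleanAlgebra B]

/-- Any filter contained in a "grill-like" set Γ extends to an ultrafilter inside Γ. -/
lemma exists_ultra_of_grill (Γ : Set B)
    (g1 : ∀ x y : B, x ∈ Γ → x ≤ y → y ∈ Γ)
    (g2 : ∀ x y : B, x ⊔ y ∈ Γ → x ∈ Γ ∨ y ∈ Γ)
    (g3 : (⊥ : B) ∉ Γ)
    (F₀ : Set B) (h₀top : (⊤ : B) ∈ F₀)
    (h₀meet : ∀ x y : B, x ∈ F₀ → y ∈ F₀ → x ⊓ y ∈ F₀)
    (h₀sub : F₀ ⊆ Γ) :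
    ∃ V : Set B, IsUltrafilter V ∧ F₀ ⊆ V ∧ V ⊆ Γ := by
  classical
  set S : Set (Set B) :=
    {F | (⊤ : B) ∈ F ∧ (∀ x y : B, x ∈ F → x ≤ y → y ∈ F) ∧
      (∀ x y : B, x ∈ F → y ∈ F → x ⊓ y ∈ F) ∧ F₀ ⊆ F ∧ F ⊆ Γ} with hS
  have hF₀' : {b : B | ∃ x ∈ F₀, x ≤ b} ∈ S := by
    refine ⟨⟨⊤, h₀top, le_rfl⟩, ?_, ?_, ?_, ?_⟩
    · rintro x y ⟨z, hz, hzx⟩ hxy; exact ⟨z, hz, hzx.trans hxy⟩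
    · rintro x y ⟨z, hz, hzx⟩ ⟨w, hw, hwy⟩
      exact ⟨z ⊓ w, h₀meet _ _ hz hw, inf_le_inf hzx hwy⟩
    · intro x hx; exact ⟨x, hx, le_rfl⟩
    · rintro b ⟨z, hz, hzb⟩; exact g1 _ _ (h₀sub hz) hzb
  have hchains : ∀ c ⊆ S, IsChain (· ⊆ ·) c → c.Nonempty →
      ∃ ub ∈ S, ∀ s ∈ c, s ⊆ ub := by
    intro c hcS hchain hcne
    obtain ⟨F, hF⟩ := hcne
    refine ⟨⋃₀ c, ⟨⟨F, hF, (hcS hF).1⟩, ?_, ?_, ?_, ?_⟩, fun s hs => Set.subset_sUnion_of_mem hs⟩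
    · rintro x y ⟨G, hG, hxG⟩ hxy; exact ⟨G, hG, (hcS hG).2.1 _ _ hxG hxy⟩
    · rintro x y ⟨G, hG, hxG⟩ ⟨G', hG', hyG'⟩
      rcases hchain.total hG hG' with h | h
      · exact ⟨G', hG', (hcS hG').2.2.1 _ _ (h hxG) hyG'⟩
      · exact ⟨G, hG, (hcS hG).2.2.1 _ _ hxG (h hyG')⟩
    · intro x hx; exact ⟨F, hF, (hcS hF).2.2.2.1 hx⟩
    · rintro b ⟨G, hG, hbG⟩; exact (hcS hG).2.2.2.2 hbG
  obtain ⟨M, hM0, hMS, hMmax⟩ := zorn_subset_nonempty S hchains _ hF₀'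
  obtain ⟨hMtop, hMup, hMmeet, hMF₀, hMΓ⟩ := hMS
  -- key step: M is an ultrafilter
  have key : ∀ y : B, y ∈ M ∨ yᶜ ∈ M := by
    intro y
    by_contra hy
    push_neg at hy
    obtain ⟨hy1, hy2⟩ := hy
    -- for z with z ∉ M, adding z must push us out of Γ
    have step : ∀ z : B, z ∉ M → ∃ f ∈ M, f ⊓ z ∉ Γ := by
      intro z hz
      by_contra hcon
      push_neg at hcon
      have hM' : {b : B | ∃ f ∈ M, f ⊓ z ≤ b} ∈ S := by
        refine ⟨⟨⊤, hMtop, inf_le_left⟩, ?_, ?_, ?_, ?_⟩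
        · rintro x b ⟨f, hf, hfx⟩ hxb; exact ⟨f, hf, hfx.trans hxb⟩
        · rintro x b ⟨f, hf, hfx⟩ ⟨f', hf', hf'b⟩
          refine ⟨f ⊓ f', hMmeet _ _ hf hf', ?_⟩
          calc f ⊓ f' ⊓ z ≤ (f ⊓ z) ⊓ (f' ⊓ z) := by
                simp only [le_inf_iff, inf_le_right, and_true]
                constructor
                · exact inf_le_of_left_le inf_le_left
                · exact inf_le_of_left_le inf_le_right
            _ ≤ x ⊓ b := inf_le_inf hfx hf'b
        · intro x hx; exact ⟨x, hMF₀ hx, inf_le_of_left_le le_rfl⟩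
        · rintro b ⟨f, hf, hfb⟩; exact g1 _ _ (hcon f hf) hfb
      have hsub : M ⊆ {b : B | ∃ f ∈ M, f ⊓ z ≤ b} := by
        intro b hb; exact ⟨b, hb, inf_le_left⟩
      have := hMmax hM' hsub
      exact hz (this ⟨⊤, hMtop, by simp⟩)
    obtain ⟨f, hf, hfy⟩ := step y hy1
    obtain ⟨f', hf', hf'y⟩ := step yᶜ hy2
    have hmem : f ⊓ f' ∈ Γ := hMΓ (hMmeet _ _ hf hf')
    have hle : f ⊓ f' ≤ (f ⊓ y) ⊔ (f' ⊓ yᶜ) := by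
      have : f ⊓ f' = ((f ⊓ f') ⊓ y) ⊔ ((f ⊓ f') ⊓ yᶜ) := by
        rw [← inf_sup_left, sup_compl_eq_top, inf_top_eq]
      rw [this]
      exact sup_le_sup (inf_le_inf_right _ inf_le_left) (inf_le_inf_right _ inf_le_right)
    rcases g2 _ _ (g1 _ _ hmem hle) with h | h
    · exact hfy h
    · exact hf'y h
  refine ⟨M, ⟨fun hbot => g3 (hMΓ hbot), hMtop, hMup, hMmeet, key⟩, hMF₀, hMΓ⟩

/-- The canonical relation R on ultrafilters is transitive iff (B,C)
satisfies the transitivity axiom (Ctr), where a ≪ b iff ¬ C a bᶜ. -/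
theorem stmt8 (C : B → B → Prop) (hC : IsPrecontact C) :
    (∀ U V W : Set B, IsUltrafilter U → IsUltrafilter V → IsUltrafilter W →
      (∀ a ∈ U, ∀ b ∈ V, C a b) → (∀ a ∈ V, ∀ b ∈ W, C a b) →
      (∀ a ∈ U, ∀ b ∈ W, C a b)) ↔
    (∀ a c : B, ¬ C a cᶜ → ∃ b : B, ¬ C a bᶜ ∧ ¬ C b cᶜ) := by
  obtain ⟨h0, hplusR, hplusL⟩ := hC
  -- monotonicity
  have mono1 : ∀ x x' y : B, C x y → x ≤ x' → C x' y := by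
    intro x x' y h hle
    have := (hplusL x x' y).mpr (Or.inl h)
    rwa [sup_eq_right.mpr hle] at this
  have mono2 : ∀ x y y' : B, C x y → y ≤ y' → C x y' := by
    intro x y y' h hle
    have := (hplusR x y y').mpr (Or.inl h)
    rwa [sup_eq_right.mpr hle] at this
  constructor
  · -- R transitive → (Ctr)
    intro hR a c hac
    by_contra hcon
    push_neg at hcon
    have H : ∀ b : B, C a bᶜ ∨ C b cᶜ := by
      intro b
      by_contra h
      push_neg at h
      exact h.2 (hcon b h.1)
    have haTop : C a ⊤ := by
      rcases H ⊥ with h | h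
      · rwa [compl_bot] at h
      · exact absurd rfl (h0 _ _ h).1
    have hTopc : C ⊤ cᶜ := by
      rcases H ⊤ with h | h
      · rw [compl_top] at h; exact absurd rfl (h0 _ _ h).2
      · exact h
    -- build V
    obtain ⟨V, hVu, hVF, hVΓ⟩ := exists_ultra_of_grill (Γ := {b : B | C b cᶜ})
      (fun x y hx hxy => mono1 _ _ _ hx hxy)
      (fun x y hxy => (hplusL x y cᶜ).mp hxy)
      (fun h => absurd rfl (h0 _ _ h).1)
      ({b : B | ¬ C a bᶜ})
      (by simp only [Set.mem_setOf_eq, compl_top]; exact fun h => absurd rfl (h0 _ _ h).2)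
      (by
        intro x y hx hy
        simp only [Set.mem_setOf_eq, compl_inf] at *
        intro h
        rcases (hplusR a xᶜ yᶜ).mp h with h' | h'
        · exact hx h'
        · exact hy h')
      (fun b hb => (H b).resolve_left hb)
    obtain ⟨hVbot, hVtop, hVup, hVmeet, hVult⟩ := hVu
    have hVa : ∀ y ∈ V, C a y := by
      intro y hy
      by_contra hCay
      have hyc : yᶜ ∈ V := hVF (by simpa using hCay)
      exact hVbot (by simpa using hVmeet _ _ hy hyc)
    have hVc : ∀ y ∈ V, C y cᶜ := fun y hy => hVΓ hy
    -- build U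
    obtain ⟨U, hUu, hUF, hUΓ⟩ := exists_ultra_of_grill (Γ := {x : B | ∀ y ∈ V, C x y})
      (fun x y hx hxy => fun z hz => mono1 _ _ _ (hx z hz) hxy)
      (by
        intro x y hxy
        by_contra h
        push_neg at h
        obtain ⟨h1, h2⟩ := h
        simp only [Set.mem_setOf_eq] at h1 h2
        push_neg at h1 h2
        obtain ⟨y₁, hy₁, hx₁⟩ := h1
        obtain ⟨y₂, hy₂, hx₂⟩ := h2
        have := hxy (y₁ ⊓ y₂) (hVmeet _ _ hy₁ hy₂)
        rcases (hplusL x y (y₁ ⊓ y₂)).mp this with h' | h'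
        · exact hx₁ (mono2 _ _ _ h' inf_le_left)
        · exact hx₂ (mono2 _ _ _ h' inf_le_right))
      (fun h => absurd rfl (h0 _ _ (h ⊤ hVtop)).1)
      ({x : B | a ≤ x})
      le_top
      (fun x y hx hy => le_inf hx hy)
      (fun x hx => fun y hy => mono1 _ _ _ (hVa y hy) hx)
    -- build W
    obtain ⟨W, hWu, hWF, hWΓ⟩ := exists_ultra_of_grill (Γ := {z : B | ∀ y ∈ V, C y z})
      (fun x y hx hxy => fun z hz => mono2 _ _ _ (hx z hz) hxy)
      (by
        intro x y hxy
        by_contra h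
        push_neg at h
        obtain ⟨h1, h2⟩ := h
        simp only [Set.mem_setOf_eq] at h1 h2
        push_neg at h1 h2
        obtain ⟨y₁, hy₁, hx₁⟩ := h1
        obtain ⟨y₂, hy₂, hx₂⟩ := h2
        have := hxy (y₁ ⊓ y₂) (hVmeet _ _ hy₁ hy₂)
        rcases (hplusR (y₁ ⊓ y₂) x y).mp this with h' | h'
        · exact hx₁ (mono1 _ _ _ h' inf_le_left)
        · exact hx₂ (mono1 _ _ _ h' inf_le_right))
      (fun h => absurd rfl (h0 _ _ (h ⊤ hVtop)).2)
      ({z : B | cᶜ ≤ z})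
      le_top
      (fun x y hx hy => le_inf hx hy)
      (fun z hz => fun y hy => mono2 _ _ _ (hVc y hy) hz)
    have := hR U V W hUu ⟨hVbot, hVtop, hVup, hVmeet, hVult⟩ hWu
      (fun x hx y hy => hUΓ hx y hy)
      (fun y hy z hz => hWΓ hz y hy)
      a (hUF le_rfl) cᶜ (hWF le_rfl)
    exact hac this
  · -- (Ctr) → R transitive
    intro hCtr U V W hU hV hW hUV hVW a ha b hb
    by_contra hab
    have : ¬ C a (bᶜ)ᶜ := by rwa [compl_compl]
    obtain ⟨d, hd1, hd2⟩ := hCtr a bᶜ this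
    rw [compl_compl] at hd2
    rcases hV.2.2.2.2 d with hdV | hdV
    · exact hd2 (hVW d hdV b hb)
    · exact hd1 (hUV a ha dᶜ hdV)
end

section
/- (Grill Lemma.) If F is a filter of a Boolean algebra B and G is a grill of B with F ⊆ G, then there exists an ultrafilter U of B with F ⊆ U ⊆ G. -/
variable {B : Type*} [BooleanAlgebra B]

/-- A grill of a Boolean algebra. -/
def IsGrill (G : Set B) : Prop :=
  G.Nonempty ∧ ⊥ ∉ G ∧ (∀ a b : B, a ∈ G → a ≤ b → b ∈ G) ∧
  (∀ a b : B, a ⊔ b ∈ G → a ∈ G ∨ b ∈ G)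

/-- A filter of a Boolean algebra (a nonempty, upward-closed, meet-closed set). -/
def IsBoolFilter (F : Set B) : Prop :=
  F.Nonempty ∧ (∀ a b : B, a ∈ F → a ≤ b → b ∈ F) ∧
  (∀ a b : B, a ∈ F → b ∈ F → a ⊓ b ∈ F)

/-- (Grill Lemma.) If F is a filter, G a grill, and F ⊆ G, then there is an
ultrafilter U with F ⊆ U ⊆ G. -/
theorem stmt9 (F G : Set B) (hF : IsBoolFilter F) (hG : IsGrill G)
    (hFG : F ⊆ G) : ∃ U : Set B, IsUltrafilter U ∧ F ⊆ U ∧ U ⊆ G := by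
  obtain ⟨hGne, hGbot, hGup, hGsup⟩ := hG
  set S : Set (Set B) := {F' | IsBoolFilter F' ∧ F ⊆ F' ∧ F' ⊆ G} with hS
  have hchainUB : ∀ c ⊆ S, IsChain (· ⊆ ·) c → c.Nonempty → ∃ ub ∈ S, ∀ s ∈ c, s ⊆ ub := by
    intro c hcS hchain hcne
    refine ⟨⋃₀ c, ⟨⟨?_, ?_, ?_⟩, ?_, ?_⟩, fun s hs => Set.subset_sUnion_of_mem hs⟩
    · obtain ⟨s, hs⟩ := hcne
      obtain ⟨⟨⟨x, hx⟩, _, _⟩, _, _⟩ := hcS hs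
      exact ⟨x, s, hs, hx⟩
    · rintro x y ⟨s, hs, hxs⟩ hxy
      exact ⟨s, hs, (hcS hs).1.2.1 x y hxs hxy⟩
    · rintro x y ⟨s, hs, hxs⟩ ⟨t, ht, hyt⟩
      rcases hchain.total hs ht with h | h
      · exact ⟨t, ht, (hcS ht).1.2.2 x y (h hxs) hyt⟩
      · exact ⟨s, hs, (hcS hs).1.2.2 x y hxs (h hyt)⟩
    · obtain ⟨s, hs⟩ := hcne
      exact (hcS hs).2.1.trans (Set.subset_sUnion_of_mem hs)
    · rintro x ⟨s, hs, hxs⟩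
      exact (hcS hs).2.2 hxs
  obtain ⟨U, hFU, hUmem, hUmax⟩ := zorn_subset_nonempty S hchainUB F ⟨hF, subset_rfl, hFG⟩
  · obtain ⟨⟨hUne, hUup, hUinf⟩, hFU', hUG⟩ := hUmem
    -- top in U
    obtain ⟨u0, hu0⟩ := hUne
    have htop : (⊤ : B) ∈ U := hUup u0 ⊤ hu0 le_top
    -- key: if all u ⊓ a ∈ G for u ∈ U, then a ∈ U
    have key : ∀ a : B, (∀ u ∈ U, u ⊓ a ∈ G) → a ∈ U := by
      intro a ha
      set U' : Set B := {x | ∃ u ∈ U, u ⊓ a ≤ x} with hU'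
      have hUsub : U ⊆ U' := fun x hx => ⟨x, hx, inf_le_left⟩
      have hU'S : U' ∈ S := by
        refine ⟨⟨⟨a, ⊤, htop, by simp⟩, ?_, ?_⟩, hFU'.trans hUsub, ?_⟩
        · rintro x y ⟨u, hu, hux⟩ hxy
          exact ⟨u, hu, hux.trans hxy⟩
        · rintro x y ⟨u, hu, hux⟩ ⟨v, hv, hvy⟩
          refine ⟨u ⊓ v, hUinf u v hu hv, le_inf ?_ ?_⟩
          · exact le_trans (inf_le_inf_right a inf_le_left) hux
          · exact le_trans (inf_le_inf_right a inf_le_right) hvy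
        · rintro x ⟨u, hu, hux⟩
          exact hGup _ _ (ha u hu) hux
      have hsub : U' ⊆ U := hUmax hU'S hUsub
      exact hsub ⟨⊤, htop, by simp⟩
    -- dichotomy
    refine ⟨U, ⟨fun h => hGbot (hUG h), htop, hUup, hUinf, ?_⟩, hFU', hUG⟩
    intro a
    by_contra hcon
    push_neg at hcon
    obtain ⟨ha, hac⟩ := hcon
    have h1 : ¬ (∀ u ∈ U, u ⊓ a ∈ G) := fun h => ha (key a h)
    have h2 : ¬ (∀ u ∈ U, u ⊓ aᶜ ∈ G) := fun h => hac (key aᶜ h)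
    push_neg at h1 h2
    obtain ⟨u, hu, hua⟩ := h1
    obtain ⟨v, hv, hva⟩ := h2
    have hw : u ⊓ v ∈ G := hUG (hUinf u v hu hv)
    have hsplit : u ⊓ v = (u ⊓ v) ⊓ a ⊔ (u ⊓ v) ⊓ aᶜ := by
      rw [← inf_sup_left, sup_compl_eq_top, inf_top_eq]
    rw [hsplit] at hw
    exact (hGsup _ _ hw).elim
      (fun h => hua (hGup _ _ h (inf_le_inf_right a inf_le_left)))
      (fun h => hva (hGup _ _ h (inf_le_inf_right aᶜ inf_le_right)))
end

section
/- Let (B,C) be a precontact algebra, X = S(B) its Stone space (the space of ultrafilters with the topology generated by the clopen sets s(a) = {u : a ∈ u}), and define R on X by uRv iff u × v ⊆ C. Then R is a closed relation on X, i.e., the set {(u,v) : uRv} is closed in X × X. -/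
variable {B : Type*} [BooleanAlgebra B]

/-- The Stone space of B: the set of ultrafilters of B. -/
def UltSpace (B : Type*) [BooleanAlgebra B] : Type _ := {U : Set B // IsUltrafilter U}

/-- The basic (cl)open set s(a) = {u : a ∈ u} of the Stone space. -/
def stoneSet (a : B) : Set (UltSpace B) := {U | a ∈ U.1}

/-- The Stone topology, generated by the sets s(a). -/
instance : TopologicalSpace (UltSpace B) :=
  TopologicalSpace.generateFrom (Set.range (stoneSet (B := B)))

/-- The canonical relation R (uRv iff u × v ⊆ C) is a closed relation on the
Stone space of B. -/
theorem stmt11 (C : B → B → Prop) (hC : IsPrecontact C) :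
    IsClosed {p : UltSpace B × UltSpace B | ∀ a ∈ p.1.1, ∀ b ∈ p.2.1, C a b} := by
  have hopen : ∀ a : B, IsOpen (stoneSet a) := fun a =>
    TopologicalSpace.GenerateOpen.basic _ ⟨a, rfl⟩
  rw [← isOpen_compl_iff, isOpen_prod_iff]
  intro u v huv
  simp only [Set.mem_compl_iff, Set.mem_setOf_eq] at huv
  push_neg at huv
  obtain ⟨a, ha, b, hb, hab⟩ := huv
  refine ⟨stoneSet a, stoneSet b, hopen a, hopen b, ha, hb, ?_⟩
  rintro ⟨u', v'⟩ ⟨hu', hv'⟩ h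
  exact hab (h a hu' b hv')
end

section
/- Let (B,C) be a precontact algebra, X = S(B) its Stone space, and R on X defined by uRv iff u × v ⊆ C. Then the Stone map s: B → CO(X) is a PCA-isomorphism from (B,C) onto (CO(X), C_R), where for clopen sets F,G: F C_R G iff ∃x∈F, ∃y∈G, xRy. In particular, for all a,b ∈ B: aCb iff s(a) C_R s(b). -/
variable {B : Type*} [BooleanAlgebra B]

/-! The ultrafilter lemma (a prime ideal separating a principal filter from an ideal) yields
enough points in `S(B)`: it separates `a ≰ b`, and, applied twice, turns a contact `a C b`
into ultrafilters `u ∋ a`, `v ∋ b` with `u × v ⊆ C`. Surjectivity onto the clopen sets comes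
from compactness of `S(B)`: an ultrafilter `𝒰` on `S(B)` converges to the point
`{a | s(a) ∈ 𝒰}`. -/

open Order Filter TopologicalSpace

namespace IsUltrafilter

variable {U : Set B}

lemma bot_notMem (hU : IsUltrafilter U) : ⊥ ∉ U := hU.1

lemma top_mem (hU : IsUltrafilter U) : ⊤ ∈ U := hU.2.1

lemma mem_of_le (hU : IsUltrafilter U) {a b : B} (ha : a ∈ U) (hab : a ≤ b) : b ∈ U :=
  hU.2.2.1 a b ha hab

lemma inf_mem (hU : IsUltrafilter U) {a b : B} (ha : a ∈ U) (hb : b ∈ U) : a ⊓ b ∈ U :=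
  hU.2.2.2.1 a b ha hb

lemma compl_mem_iff (hU : IsUltrafilter U) {a : B} : aᶜ ∈ U ↔ a ∉ U := by
  refine ⟨fun hc ha => hU.bot_notMem ?_, (hU.2.2.2.2 a).resolve_left⟩
  simpa using hU.inf_mem ha hc

lemma of_isPrime {J : Ideal B} (hJ : J.IsPrime) : IsUltrafilter (J : Set B)ᶜ :=
  ⟨fun h => h J.bot_mem, Ideal.isProper_iff_top_notMem.1 hJ.toIsProper,
    fun _ _ ha hab => Ideal.mem_compl_of_ge hab ha,
    fun _ _ ha hb h => (hJ.mem_or_mem h).elim ha hb,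
    fun _ => hJ.toIsProper.notMem_or_compl_notMem⟩

end IsUltrafilter

lemma exists_isUltrafilter_of_notMem_ideal {I : Ideal B} {a : B} (ha : a ∉ I) :
    ∃ U : Set B, IsUltrafilter U ∧ a ∈ U ∧ ∀ p ∈ U, p ∉ I := by
  have hdisj : Disjoint (PFilter.principal a : Set B) I :=
    Set.disjoint_left.2 fun p hap hp => ha (I.lower hap hp)
  obtain ⟨J, hJ, hIJ, hdisjJ⟩ := DistribLattice.prime_ideal_of_disjoint_filter_ideal hdisj
  exact ⟨_, .of_isPrime hJ, Set.disjoint_left.1 hdisjJ (PFilter.mem_principal.2 le_rfl),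
    fun p hp hpI => hp (hIJ hpI)⟩

lemma stoneSet_subset_stoneSet {a b : B} : stoneSet a ⊆ stoneSet b ↔ a ≤ b := by
  refine ⟨fun h => ?_, fun h u hu => u.2.mem_of_le hu h⟩
  by_contra hab
  obtain ⟨U, hU, haU, hbU⟩ :=
    exists_isUltrafilter_of_notMem_ideal (I := Ideal.principal b) (by simpa using hab)
  exact hbU b (h (show (⟨U, hU⟩ : UltSpace B) ∈ stoneSet a from haU)) Ideal.mem_principal_self

lemma stoneSet_injective : Function.Injective (stoneSet (B := B)) := fun _ _ h =>
  le_antisymm (stoneSet_subset_stoneSet.1 h.le) (stoneSet_subset_stoneSet.1 h.ge)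

lemma stoneSet_inf (a b : B) : stoneSet (a ⊓ b) = stoneSet a ∩ stoneSet b := by
  ext u
  exact ⟨fun h => ⟨u.2.mem_of_le h inf_le_left, u.2.mem_of_le h inf_le_right⟩,
    fun h => u.2.inf_mem h.1 h.2⟩

lemma stoneSet_compl (a : B) : stoneSet aᶜ = (stoneSet a)ᶜ := by
  ext u
  exact u.2.compl_mem_iff

lemma stoneSet_sup (a b : B) : stoneSet (a ⊔ b) = stoneSet a ∪ stoneSet b := by
  rw [← compl_inj_iff, ← stoneSet_compl, Set.compl_union, ← stoneSet_compl, ← stoneSet_compl,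
    ← stoneSet_inf, compl_sup]

lemma stoneSet_bot : stoneSet (⊥ : B) = ∅ :=
  Set.eq_empty_of_forall_notMem fun u => u.2.bot_notMem

lemma stoneSet_top : stoneSet (⊤ : B) = Set.univ :=
  Set.eq_univ_of_forall fun u => u.2.top_mem

lemma stoneSet_finset_sup {ι : Type*} (t : Finset ι) (f : ι → B) :
    stoneSet (t.sup f) = ⋃ i ∈ t, stoneSet (f i) := by
  classical
  induction t using Finset.induction_on with
  | empty => simp [stoneSet_bot]
  | insert i t _ ih => simp [Finset.sup_insert, stoneSet_sup, ih]

lemma isTopologicalBasis_stoneSet : IsTopologicalBasis (Set.range (stoneSet (B := B))) := by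
  refine isTopologicalBasis_of_subbasis_of_finiteInter rfl ⟨⟨⊤, stoneSet_top⟩, ?_⟩
  rintro _ ⟨a, rfl⟩ _ ⟨b, rfl⟩
  exact ⟨a ⊓ b, stoneSet_inf a b⟩

lemma isClopen_stoneSet (a : B) : IsClopen (stoneSet a) :=
  ⟨by rw [← isOpen_compl_iff, ← stoneSet_compl]; exact isOpen_generateFrom_of_mem ⟨aᶜ, rfl⟩,
    isOpen_generateFrom_of_mem ⟨a, rfl⟩⟩

def Ultrafilter.stoneLim (𝒰 : Ultrafilter (UltSpace B)) : UltSpace B :=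
  ⟨{a | stoneSet a ∈ 𝒰},
    by simp [stoneSet_bot],
    show stoneSet (⊤ : B) ∈ 𝒰 by rw [stoneSet_top]; exact univ_mem,
    fun _ _ ha hab => 𝒰.1.mem_of_superset ha (stoneSet_subset_stoneSet.2 hab),
    fun a b ha hb => show stoneSet (a ⊓ b) ∈ 𝒰 by rw [stoneSet_inf]; exact inter_mem ha hb,
    fun a => by simpa [stoneSet_compl] using 𝒰.mem_or_compl_mem (stoneSet a)⟩

lemma Ultrafilter.le_nhds_stoneLim (𝒰 : Ultrafilter (UltSpace B)) : ↑𝒰 ≤ nhds 𝒰.stoneLim := by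
  rw [isTopologicalBasis_stoneSet.nhds_hasBasis.ge_iff]
  rintro _ ⟨⟨a, rfl⟩, ha⟩
  exact ha

instance : CompactSpace (UltSpace B) :=
  isCompact_univ_iff.1 <| isCompact_iff_ultrafilter_le_nhds'.2 fun 𝒰 _ =>
    ⟨𝒰.stoneLim, trivial, 𝒰.le_nhds_stoneLim⟩

lemma exists_stoneSet_eq_of_isClopen {F : Set (UltSpace B)} (hF : IsClopen F) :
    ∃ a : B, stoneSet a = F := by
  obtain ⟨s, hs, rfl⟩ := (isCompact_open_iff_eq_finite_iUnion_of_isTopologicalBasis _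
    isTopologicalBasis_stoneSet (fun a => (isClopen_stoneSet a).isClosed.isCompact) F).1
      ⟨hF.isClosed.isCompact, hF.isOpen⟩
  exact ⟨hs.toFinset.sup id, by simp [stoneSet_finset_sup]⟩

namespace IsPrecontact

variable {C : B → B → Prop} {a a' b b' : B}

lemma mono_left (hC : IsPrecontact C) (h : C a b) (ha : a ≤ a') : C a' b := by
  simpa [sup_eq_right.2 ha] using (hC.2.2 a a' b).2 (Or.inl h)

lemma mono_right (hC : IsPrecontact C) (h : C a b) (hb : b ≤ b') : C a b' := by
  simpa [sup_eq_right.2 hb] using (hC.2.1 a b b').2 (Or.inl h)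

lemma isIdeal_setOf_not_left (hC : IsPrecontact C) (b : B) : IsIdeal {p | ¬ C p b} where
  IsLowerSet _ _ hle h hc := h (hC.mono_left hc hle)
  Nonempty := ⟨⊥, fun h => (hC.1 _ _ h).1 rfl⟩
  Directed := SupClosed.directedOn fun _ hx _ hy h => ((hC.2.2 _ _ b).1 h).elim hx hy

lemma isIdeal_setOf_exists_not_right (hC : IsPrecontact C) {U : Set B} (hU : IsUltrafilter U) :
    IsIdeal {q | ∃ p ∈ U, ¬ C p q} where
  IsLowerSet _ _ hle := fun ⟨p, hp, h⟩ => ⟨p, hp, fun hc => h (hC.mono_right hc hle)⟩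
  Nonempty := ⟨⊥, ⊤, hU.top_mem, fun h => (hC.1 _ _ h).2 rfl⟩
  Directed := SupClosed.directedOn fun x ⟨p, hp, hpx⟩ y ⟨q, hq, hqy⟩ =>
    ⟨p ⊓ q, hU.inf_mem hp hq, fun h => ((hC.2.1 _ x y).1 h).elim
      (fun h => hpx (hC.mono_left h inf_le_left)) (fun h => hqy (hC.mono_left h inf_le_right))⟩

lemma exists_ultSpace_of_contact (hC : IsPrecontact C) (hab : C a b) :
    ∃ u ∈ stoneSet a, ∃ v ∈ stoneSet b, ∀ p ∈ u.1, ∀ q ∈ v.1, C p q := by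
  obtain ⟨U, hU, haU, hUb⟩ := exists_isUltrafilter_of_notMem_ideal
    (I := (hC.isIdeal_setOf_not_left b).toIdeal) (a := a) (by simpa [Ideal.mem_toIdeal])
  obtain ⟨V, hV, hbV, hUV⟩ := exists_isUltrafilter_of_notMem_ideal
    (I := (hC.isIdeal_setOf_exists_not_right hU).toIdeal) (a := b)
    (by simpa [Ideal.mem_toIdeal] using fun p hp => not_not.2 (hUb p hp))
  refine ⟨⟨U, hU⟩, haU, ⟨V, hV⟩, hbV, fun p hp q hq => ?_⟩
  by_contra h
  exact hUV q hq ((Ideal.mem_toIdeal _).2 ⟨p, hp, h⟩)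

lemma contact_iff (hC : IsPrecontact C) :
    C a b ↔ ∃ u ∈ stoneSet a, ∃ v ∈ stoneSet b, ∀ p ∈ u.1, ∀ q ∈ v.1, C p q :=
  ⟨hC.exists_ultSpace_of_contact, fun ⟨_, hau, _, hbv, h⟩ => h a hau b hbv⟩

end IsPrecontact

/-- The Stone map a ↦ s(a) is a PCA-isomorphism from (B,C) onto (CO(S(B)), C_R):
each s(a) is clopen, the map is a Boolean isomorphism onto the clopen sets, and
aCb iff s(a) C_R s(b), where F C_R G iff ∃ x ∈ F, ∃ y ∈ G with xRy. -/
theorem stmt12 (C : B → B → Prop) (hC : IsPrecontact C) :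
    (∀ a : B, IsClopen (stoneSet a)) ∧
    Function.Injective (stoneSet (B := B)) ∧
    (∀ F : Set (UltSpace B), IsClopen F → ∃ a : B, stoneSet a = F) ∧
    (∀ a b : B, stoneSet (a ⊔ b) = stoneSet a ∪ stoneSet b) ∧
    (∀ a b : B, stoneSet (a ⊓ b) = stoneSet a ∩ stoneSet b) ∧
    (∀ a : B, stoneSet aᶜ = (stoneSet a)ᶜ) ∧
    (stoneSet (⊥ : B) = ∅) ∧ (stoneSet (⊤ : B) = Set.univ) ∧
    (∀ a b : B, C a b ↔ ∃ u ∈ stoneSet a, ∃ v ∈ stoneSet b,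
      (∀ p ∈ u.1, ∀ q ∈ v.1, C p q)) :=
  ⟨isClopen_stoneSet, stoneSet_injective, fun _ => exists_stoneSet_eq_of_isClopen, stoneSet_sup,
    stoneSet_inf, stoneSet_compl, stoneSet_bot, stoneSet_top, fun _ _ => hC.contact_iff⟩
end

section
/- Let B be a Boolean algebra and X = S(B) its Stone space. The map sending a precontact relation C on B to the relation R_C on X (defined by u R_C v iff u × v ⊆ C) is an order isomorphism between the set of precontact relations on B ordered by inclusion and the set of closed relations on X ordered by inclusion. Under this isomorphism, contact relations correspond exactly to reflexive symmetric closed relations. -/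
variable {B : Type*} [BooleanAlgebra B]

/-! ### Auxiliary lemmas -/

lemma precontact_mono {C : B → B → Prop} (hC : IsPrecontact C) {a a' b b' : B}
    (ha : a ≤ a') (hb : b ≤ b') (h : C a b) : C a' b' := by
  obtain ⟨_, hR, hL⟩ := hC
  have h1 : C a b' := by
    have := (hR a b b').mpr (Or.inl h)
    rwa [sup_eq_right.mpr hb] at this
  have := (hL a a' b').mpr (Or.inl h1)
  rwa [sup_eq_right.mpr ha] at this

/-- A (not necessarily proper) filter, as a set. -/
def PCFilt (F : Set B) : Prop :=
  ⊤ ∈ F ∧ (∀ x ∈ F, ∀ y, x ≤ y → y ∈ F) ∧ (∀ x ∈ F, ∀ y ∈ F, x ⊓ y ∈ F)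

lemma pc_key {C : B → B → Prop} (hC : IsPrecontact C) {F G : Set B}
    (hF : PCFilt F) (hG : PCFilt G) (hFG : ∀ x ∈ F, ∀ y ∈ G, C x y) (x : B) :
    (∀ f ∈ F, ∀ g ∈ G, C (f ⊓ x) g) ∨ (∀ f ∈ F, ∀ g ∈ G, C (f ⊓ xᶜ) g) := by
  by_contra h
  push_neg at h
  obtain ⟨⟨f1, hf1, g1, hg1, h1⟩, ⟨f2, hf2, g2, hg2, h2⟩⟩ := h
  have hf : f1 ⊓ f2 ∈ F := hF.2.2 _ hf1 _ hf2
  have hg : g1 ⊓ g2 ∈ G := hG.2.2 _ hg1 _ hg2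
  have hfg : C (f1 ⊓ f2) (g1 ⊓ g2) := hFG _ hf _ hg
  have hsplit : (f1 ⊓ f2) = ((f1 ⊓ f2) ⊓ x) ⊔ ((f1 ⊓ f2) ⊓ xᶜ) := by
    simp [← inf_sup_left]
  rw [hsplit] at hfg
  rcases (hC.2.2 _ _ _).mp hfg with h' | h'
  · exact h1 (precontact_mono hC (inf_le_inf_right x inf_le_left)
      inf_le_left h')
  · exact h2 (precontact_mono hC (inf_le_inf_right xᶜ inf_le_right)
      inf_le_right h')

lemma pc_swap {C : B → B → Prop} (hC : IsPrecontact C) :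
    IsPrecontact (fun p q : B => C q p) :=
  ⟨fun a b h => (hC.1 b a h).symm, fun a b c => hC.2.2 b c a,
    fun a b c => hC.2.1 c a b⟩

lemma pc_exists_pair {C : B → B → Prop} (hC : IsPrecontact C) {a b : B} (hab : C a b) :
    ∃ u v : UltSpace B, a ∈ u.1 ∧ b ∈ v.1 ∧ ∀ x ∈ u.1, ∀ y ∈ v.1, C x y := by
  classical
  set S : Set (Set B × Set B) :=
    {p | a ∈ p.1 ∧ b ∈ p.2 ∧ PCFilt p.1 ∧ PCFilt p.2 ∧
      ∀ x ∈ p.1, ∀ y ∈ p.2, C x y} with hSdef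
  have hstart : (({x | a ≤ x} : Set B), ({y | b ≤ y} : Set B)) ∈ S := by
    refine ⟨le_rfl, le_rfl, ⟨le_top, ?_, ?_⟩, ⟨le_top, ?_, ?_⟩, ?_⟩
    · exact fun x hx y hxy => le_trans hx hxy
    · exact fun x hx y hy => le_inf hx hy
    · exact fun x hx y hxy => le_trans hx hxy
    · exact fun x hx y hy => le_inf hx hy
    · exact fun x hx y hy => precontact_mono hC hx hy hab
  have hbound : ∀ c ⊆ S, IsChain (· ≤ ·) c → ∀ y ∈ c, ∃ ub ∈ S, ∀ z ∈ c, z ≤ ub := by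
    intro c hcS hchain y hy
    have tot : ∀ p ∈ c, ∀ q ∈ c, p ≤ q ∨ q ≤ p := by
      intro p hp q hq
      rcases eq_or_ne p q with rfl | hne
      · exact Or.inl le_rfl
      · exact hchain hp hq hne
    refine ⟨(⋃ p ∈ c, p.1, ⋃ p ∈ c, p.2), ⟨?_, ?_, ⟨?_, ?_, ?_⟩, ⟨?_, ?_, ?_⟩, ?_⟩, ?_⟩
    · exact Set.mem_biUnion hy (hcS hy).1
    · exact Set.mem_biUnion hy (hcS hy).2.1
    · exact Set.mem_biUnion hy (hcS hy).2.2.1.1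
    · rintro z hz w hzw
      obtain ⟨p, hp, hzp⟩ := Set.mem_iUnion₂.mp hz
      exact Set.mem_biUnion hp ((hcS hp).2.2.1.2.1 z hzp w hzw)
    · rintro z hz w hw
      obtain ⟨p, hp, hzp⟩ := Set.mem_iUnion₂.mp hz
      obtain ⟨q, hq, hwq⟩ := Set.mem_iUnion₂.mp hw
      rcases tot p hp q hq with hpq | hqp
      · exact Set.mem_biUnion hq ((hcS hq).2.2.1.2.2 z (hpq.1 hzp) w hwq)
      · exact Set.mem_biUnion hp ((hcS hp).2.2.1.2.2 z hzp w (hqp.1 hwq))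
    · exact Set.mem_biUnion hy (hcS hy).2.2.2.1.1
    · rintro z hz w hzw
      obtain ⟨p, hp, hzp⟩ := Set.mem_iUnion₂.mp hz
      exact Set.mem_biUnion hp ((hcS hp).2.2.2.1.2.1 z hzp w hzw)
    · rintro z hz w hw
      obtain ⟨p, hp, hzp⟩ := Set.mem_iUnion₂.mp hz
      obtain ⟨q, hq, hwq⟩ := Set.mem_iUnion₂.mp hw
      rcases tot p hp q hq with hpq | hqp
      · exact Set.mem_biUnion hq ((hcS hq).2.2.2.1.2.2 z (hpq.2 hzp) w hwq)
      · exact Set.mem_biUnion hp ((hcS hp).2.2.2.1.2.2 z hzp w (hqp.2 hwq))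
    · rintro z hz w hw
      obtain ⟨p, hp, hzp⟩ := Set.mem_iUnion₂.mp hz
      obtain ⟨q, hq, hwq⟩ := Set.mem_iUnion₂.mp hw
      rcases tot p hp q hq with hpq | hqp
      · exact (hcS hq).2.2.2.2 z (hpq.1 hzp) w hwq
      · exact (hcS hp).2.2.2.2 z hzp w (hqp.2 hwq)
    · intro z hz
      exact ⟨Set.subset_biUnion_of_mem hz, Set.subset_biUnion_of_mem hz⟩
  obtain ⟨m, _, hm⟩ := zorn_le_nonempty₀ S hbound _ hstart
  obtain ⟨haF, hbG, hF, hG, hFG⟩ := hm.1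
  have hbotF : ⊥ ∉ m.1 := fun h => (hC.1 _ _ (hFG _ h _ hbG)).1 rfl
  have hbotG : ⊥ ∉ m.2 := fun h => (hC.1 _ _ (hFG _ haF _ h)).2 rfl
  -- extension step on the left component
  have stepF : ∀ x : B, (∀ f ∈ m.1, ∀ g ∈ m.2, C (f ⊓ x) g) → x ∈ m.1 := by
    intro x hk
    set F' : Set B := {z | ∃ f ∈ m.1, f ⊓ x ≤ z} with hF'def
    have hsub : m.1 ⊆ F' := fun f hf => ⟨f, hf, inf_le_left⟩
    have hS' : (F', m.2) ∈ S := by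
      refine ⟨hsub haF, hbG, ⟨hsub hF.1, ?_, ?_⟩, hG, ?_⟩
      · rintro z ⟨f, hf, hfz⟩ w hzw; exact ⟨f, hf, hfz.trans hzw⟩
      · rintro z ⟨f, hf, hfz⟩ w ⟨f', hf', hf'w⟩
        refine ⟨f ⊓ f', hF.2.2 _ hf _ hf', le_inf ?_ ?_⟩
        · exact le_trans (inf_le_inf_right x inf_le_left) hfz
        · exact le_trans (inf_le_inf_right x inf_le_right) hf'w
      · rintro z ⟨f, hf, hfz⟩ g hg
        exact precontact_mono hC hfz le_rfl (hk f hf g hg)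
    have hle : (F', m.2) ≤ m := hm.2 hS' ⟨hsub, le_rfl⟩
    exact hle.1 ⟨⊤, hF.1, by simp⟩
  -- extension step on the right component
  have stepG : ∀ x : B, (∀ g ∈ m.2, ∀ f ∈ m.1, C f (g ⊓ x)) → x ∈ m.2 := by
    intro x hk
    set G' : Set B := {z | ∃ g ∈ m.2, g ⊓ x ≤ z} with hG'def
    have hsub : m.2 ⊆ G' := fun g hg => ⟨g, hg, inf_le_left⟩
    have hS' : (m.1, G') ∈ S := by
      refine ⟨haF, hsub hbG, hF, ⟨hsub hG.1, ?_, ?_⟩, ?_⟩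
      · rintro z ⟨g, hg, hgz⟩ w hzw; exact ⟨g, hg, hgz.trans hzw⟩
      · rintro z ⟨g, hg, hgz⟩ w ⟨g', hg', hg'w⟩
        refine ⟨g ⊓ g', hG.2.2 _ hg _ hg', le_inf ?_ ?_⟩
        · exact le_trans (inf_le_inf_right x inf_le_left) hgz
        · exact le_trans (inf_le_inf_right x inf_le_right) hg'w
      · rintro f hf z ⟨g, hg, hgz⟩
        exact precontact_mono hC le_rfl hgz (hk g hg f hf)
    have hle : (m.1, G') ≤ m := hm.2 hS' ⟨le_rfl, hsub⟩
    exact hle.2 ⟨⊤, hG.1, by simp⟩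
  have hultF : ∀ x : B, x ∈ m.1 ∨ xᶜ ∈ m.1 := by
    intro x
    rcases pc_key hC hF hG hFG x with hk | hk
    · exact Or.inl (stepF x hk)
    · exact Or.inr (stepF xᶜ hk)
  have hultG : ∀ x : B, x ∈ m.2 ∨ xᶜ ∈ m.2 := by
    intro x
    rcases pc_key (pc_swap hC) hG hF (fun y hy z hz => hFG z hz y hy) x with hk | hk
    · exact Or.inl (stepG x hk)
    · exact Or.inr (stepG xᶜ hk)
  refine ⟨⟨m.1, hbotF, hF.1, fun p q hp hpq => hF.2.1 p hp q hpq,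
      fun p q hp hq => hF.2.2 p hp q hq, hultF⟩,
    ⟨m.2, hbotG, hG.1, fun p q hp hpq => hG.2.1 p hp q hpq,
      fun p q hp hq => hG.2.2 p hp q hq, hultG⟩, haF, hbG, hFG⟩
lemma pc_exists_ult {a : B} (ha : a ≠ ⊥) : ∃ u : UltSpace B, a ∈ u.1 := by
  have hov : IsPrecontact (fun x y : B => x ⊓ y ≠ ⊥) := by
    refine ⟨?_, ?_, ?_⟩
    · intro x y h
      constructor <;> rintro rfl <;> simp at h
    · intro a b c
      show a ⊓ (b ⊔ c) ≠ ⊥ ↔ a ⊓ b ≠ ⊥ ∨ a ⊓ c ≠ ⊥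
      rw [inf_sup_left, ne_eq, sup_eq_bot_iff]
      tauto
    · intro a b c
      show (a ⊔ b) ⊓ c ≠ ⊥ ↔ a ⊓ c ≠ ⊥ ∨ b ⊓ c ≠ ⊥
      rw [inf_sup_right, ne_eq, sup_eq_bot_iff]
      tauto
  obtain ⟨u, v, hau, _, _⟩ := pc_exists_pair hov (a := a) (b := a) (by simpa using ha)
  exact ⟨u, hau⟩

lemma ult_prime {U : Set B} (hU : IsUltrafilter U) (b c : B) :
    b ⊔ c ∈ U ↔ b ∈ U ∨ c ∈ U := by
  obtain ⟨hbot, htop, hup, hmeet, hcomp⟩ := hU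
  constructor
  · intro h
    by_contra hn
    push_neg at hn
    rcases hcomp b with hb | hb
    · exact hn.1 hb
    rcases hcomp c with hc | hc
    · exact hn.2 hc
    have hmem : (b ⊔ c) ⊓ (bᶜ ⊓ cᶜ) ∈ U := hmeet _ _ h (hmeet _ _ hb hc)
    have hbe : (b ⊔ c) ⊓ (bᶜ ⊓ cᶜ) = ⊥ := by
      rw [← compl_sup]; exact inf_compl_eq_bot
    exact hbot (hbe ▸ hmem)
  · rintro (h | h)
    · exact hup _ _ h le_sup_left
    · exact hup _ _ h le_sup_right

lemma stoneSet_isOpen (a : B) : IsOpen (stoneSet a) :=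
  TopologicalSpace.isOpen_generateFrom_of_mem ⟨a, rfl⟩

lemma mem_basis_of_open {U : Set (UltSpace B)} (hU : IsOpen U) :
    ∀ u ∈ U, ∃ a ∈ u.1, stoneSet a ⊆ U := by
  have hU' : TopologicalSpace.GenerateOpen (Set.range (stoneSet (B := B))) U := hU
  clear hU
  induction hU' with
  | basic s hs =>
      rintro u hu
      obtain ⟨a, rfl⟩ := hs
      exact ⟨a, hu, subset_rfl⟩
  | univ =>
      intro u _
      exact ⟨⊤, u.2.2.1, Set.subset_univ _⟩
  | inter s t hs ht ihs iht =>
      intro u hu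
      obtain ⟨x, hx, hsx⟩ := ihs u hu.1
      obtain ⟨y, hy, hsy⟩ := iht u hu.2
      refine ⟨x ⊓ y, u.2.2.2.2.1 x y hx hy, fun w hw => ?_⟩
      exact ⟨hsx (w.2.2.2.1 _ x hw inf_le_left), hsy (w.2.2.2.1 _ y hw inf_le_right)⟩
  | sUnion S hS ih =>
      intro u hu
      obtain ⟨t, ht, hut⟩ := hu
      obtain ⟨x, hx, hs⟩ := ih t ht u hut
      exact ⟨x, hx, hs.trans (Set.subset_sUnion_of_mem ht)⟩

/-- The map C ↦ R_C (u R_C v iff u × v ⊆ C) is an order isomorphism between the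
precontact relations on B (ordered by inclusion) and the closed relations on the
Stone space of B (ordered by inclusion); contact relations correspond exactly to
the reflexive symmetric closed relations. -/
theorem stmt13 :
    (∀ C : B → B → Prop, IsPrecontact C →
      IsClosed {p : UltSpace B × UltSpace B | ∀ a ∈ p.1.1, ∀ b ∈ p.2.1, C a b}) ∧
    (∀ C₁ C₂ : B → B → Prop, IsPrecontact C₁ → IsPrecontact C₂ →
      ((∀ a b : B, C₁ a b → C₂ a b) ↔
        (∀ u v : UltSpace B,
          (∀ a ∈ u.1, ∀ b ∈ v.1, C₁ a b) → (∀ a ∈ u.1, ∀ b ∈ v.1, C₂ a b)))) ∧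
    (∀ R : UltSpace B → UltSpace B → Prop,
      IsClosed {p : UltSpace B × UltSpace B | R p.1 p.2} →
      ∃ C : B → B → Prop, IsPrecontact C ∧
        ∀ u v : UltSpace B, (R u v ↔ ∀ a ∈ u.1, ∀ b ∈ v.1, C a b)) ∧
    (∀ C : B → B → Prop, IsPrecontact C →
      (((∀ a : B, a ≠ ⊥ → C a a) ∧ (∀ a b : B, C a b → C b a)) ↔
        ((∀ u : UltSpace B, ∀ a ∈ u.1, ∀ b ∈ u.1, C a b) ∧
         (∀ u v : UltSpace B,
           (∀ a ∈ u.1, ∀ b ∈ v.1, C a b) → (∀ a ∈ v.1, ∀ b ∈ u.1, C a b))))) := by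
  refine ⟨?_, ?_, ?_, ?_⟩
  · -- Part 1: R_C is closed
    intro C hC
    rw [← isOpen_compl_iff]
    have hcompl : {p : UltSpace B × UltSpace B | ∀ a ∈ p.1.1, ∀ b ∈ p.2.1, C a b}ᶜ =
        ⋃ (q : B × B) (_ : ¬ C q.1 q.2), stoneSet q.1 ×ˢ stoneSet q.2 := by
      ext p
      simp only [Set.mem_compl_iff, Set.mem_setOf_eq, Set.mem_iUnion, Set.mem_prod]
      constructor
      · intro h
        push_neg at h
        obtain ⟨x, hx, y, hy, hnc⟩ := h
        exact ⟨(x, y), hnc, hx, hy⟩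
      · rintro ⟨⟨x, y⟩, hnc, hx, hy⟩ h
        exact hnc (h x hx y hy)
    rw [hcompl]
    exact isOpen_iUnion fun q => isOpen_iUnion fun _ =>
      (stoneSet_isOpen _).prod (stoneSet_isOpen _)
  · -- Part 2: order embedding
    intro C₁ C₂ h1 _
    constructor
    · intro h u v hR x hx y hy
      exact h _ _ (hR x hx y hy)
    · intro h x y hxy
      obtain ⟨u, v, hau, hbv, huv⟩ := pc_exists_pair h1 hxy
      exact h u v huv x hau y hbv
  · -- Part 3: surjectivity onto closed relations
    intro R hR
    refine ⟨fun x y => ∃ u v : UltSpace B, x ∈ u.1 ∧ y ∈ v.1 ∧ R u v, ⟨?_, ?_, ?_⟩, ?_⟩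
    · rintro x y ⟨u, v, hx, hy, _⟩
      exact ⟨fun h => u.2.1 (h ▸ hx), fun h => v.2.1 (h ▸ hy)⟩
    · intro x y z
      constructor
      · rintro ⟨u, v, hx, hyz, hr⟩
        rcases (ult_prime v.2 y z).mp hyz with h | h
        · exact Or.inl ⟨u, v, hx, h, hr⟩
        · exact Or.inr ⟨u, v, hx, h, hr⟩
      · rintro (⟨u, v, hx, hy, hr⟩ | ⟨u, v, hx, hy, hr⟩)
        · exact ⟨u, v, hx, (ult_prime v.2 y z).mpr (Or.inl hy), hr⟩
        · exact ⟨u, v, hx, (ult_prime v.2 y z).mpr (Or.inr hy), hr⟩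
    · intro x y z
      constructor
      · rintro ⟨u, v, hxy, hz, hr⟩
        rcases (ult_prime u.2 x y).mp hxy with h | h
        · exact Or.inl ⟨u, v, h, hz, hr⟩
        · exact Or.inr ⟨u, v, h, hz, hr⟩
      · rintro (⟨u, v, hx, hz, hr⟩ | ⟨u, v, hx, hz, hr⟩)
        · exact ⟨u, v, (ult_prime u.2 x y).mpr (Or.inl hx), hz, hr⟩
        · exact ⟨u, v, (ult_prime u.2 x y).mpr (Or.inr hx), hz, hr⟩
    · intro u v
      constructor
      · intro hr x hx y hy
        exact ⟨u, v, hx, hy, hr⟩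
      · intro h
        by_contra hnr
        have hopen : IsOpen {p : UltSpace B × UltSpace B | R p.1 p.2}ᶜ := hR.isOpen_compl
        obtain ⟨U, V, hUo, hVo, huU, hvV, hUV⟩ := isOpen_prod_iff.mp hopen u v hnr
        obtain ⟨x, hx, hsx⟩ := mem_basis_of_open hUo u huU
        obtain ⟨y, hy, hsy⟩ := mem_basis_of_open hVo v hvV
        obtain ⟨u', v', hxu', hyv', hr'⟩ := h x hx y hy
        exact hUV (Set.mk_mem_prod (hsx hxu') (hsy hyv')) hr'
  · -- Part 4: contact relations ↔ reflexive symmetric closed relations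
    intro C hC
    constructor
    · rintro ⟨hrefl, hsym⟩
      constructor
      · intro u x hx y hy
        have hxy : x ⊓ y ∈ u.1 := u.2.2.2.2.1 x y hx hy
        have hne : x ⊓ y ≠ ⊥ := fun h => u.2.1 (h ▸ hxy)
        exact precontact_mono hC inf_le_left inf_le_right (hrefl _ hne)
      · intro u v h x hx y hy
        exact hsym _ _ (h y hy x hx)
    · rintro ⟨hrefl, hsym⟩
      constructor
      · intro x hx
        obtain ⟨u, hu⟩ := pc_exists_ult hx
        exact hrefl u x hu x hu
      · intro x y hxy
        obtain ⟨u, v, hxu, hyv, huv⟩ := pc_exists_pair hC hxy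
        exact hsym u v huv y hyv x hxu
end

section
/- Let X be a topological space and x ∈ X. Then x is an u-point (for all open U,V: x ∈ cl(U) ∩ cl(V) implies x ∈ cl(U∩V)) if and only if σ_x = {F ∈ RC(X) : x ∈ F} is an ultrafilter of the Boolean algebra RC(X) of regular closed sets. -/
/-- x is an u-point: for all open U, V, x ∈ cl(U) ∩ cl(V) implies x ∈ cl(U ∩ V). -/
def IsUPoint {Z : Type*} [TopologicalSpace Z] (x : Z) : Prop :=
  ∀ U V : Set Z, IsOpen U → IsOpen V →
    x ∈ closure U ∩ closure V → x ∈ closure (U ∩ V)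

/-- A regular closed subset of a topological space. -/
def IsRegClosed {Z : Type*} [TopologicalSpace Z] (F : Set Z) : Prop :=
  F = closure (interior F)

/-- An ultrafilter of the Boolean algebra RC(X) of regular closed sets, with
operations F·G = cl(int(F ∩ G)), F* = cl(Fᶜ), 0 = ∅, 1 = X. -/
def IsRCUltrafilter {Z : Type*} [TopologicalSpace Z] (σ : Set (Set Z)) : Prop :=
  (∀ F ∈ σ, IsRegClosed F) ∧ (∅ : Set Z) ∉ σ ∧ (Set.univ : Set Z) ∈ σ ∧
  (∀ F G : Set Z, F ∈ σ → IsRegClosed G → F ⊆ G → G ∈ σ) ∧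
  (∀ F G : Set Z, F ∈ σ → G ∈ σ → closure (interior (F ∩ G)) ∈ σ) ∧
  (∀ F : Set Z, IsRegClosed F → F ∈ σ ∨ closure Fᶜ ∈ σ)

lemma regClosed_closure_of_open {Z : Type*} [TopologicalSpace Z] {U : Set Z}
    (hU : IsOpen U) : IsRegClosed (closure U) := by
  refine le_antisymm (closure_mono (interior_maximal subset_closure hU)) ?_
  calc closure (interior (closure U)) ⊆ closure (closure U) :=
        closure_mono interior_subset
    _ = closure U := closure_closure

lemma regClosed_cl_int {Z : Type*} [TopologicalSpace Z] (S : Set Z) :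
    IsRegClosed (closure (interior S)) := by
  refine le_antisymm
    (closure_mono (interior_maximal subset_closure isOpen_interior)) ?_
  calc closure (interior (closure (interior S))) ⊆ closure (closure (interior S)) :=
        closure_mono interior_subset
    _ = closure (interior S) := closure_closure

/-- x is an u-point iff σ_x = {F ∈ RC(X) : x ∈ F} is an ultrafilter of RC(X). -/
theorem stmt17 {X : Type*} [TopologicalSpace X] (x : X) :
    IsUPoint x ↔ IsRCUltrafilter {F : Set X | IsRegClosed F ∧ x ∈ F} := by
  constructor
  · intro hu
    refine ⟨fun F hF => hF.1, ?_, ?_, ?_, ?_, ?_⟩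
    · intro h; exact h.2
    · exact ⟨by simp [IsRegClosed], trivial⟩
    · intro F G hF hG hFG; exact ⟨hG, hFG hF.2⟩
    · intro F G hF hG
      refine ⟨regClosed_cl_int _, ?_⟩
      have hx : x ∈ closure (interior F ∩ interior G) := by
        apply hu _ _ isOpen_interior isOpen_interior
        have hFe : F = closure (interior F) := hF.1
        have hGe : G = closure (interior G) := hG.1
        exact ⟨hFe ▸ hF.2, hGe ▸ hG.2⟩
      exact closure_mono (le_of_eq interior_inter.symm) hx
    · intro F hF
      by_cases hx : x ∈ F
      · exact Or.inl ⟨hF, hx⟩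
      · refine Or.inr ⟨?_, subset_closure hx⟩
        have : IsOpen Fᶜ := by
          rw [hF]; exact isClosed_closure.isOpen_compl
        exact regClosed_closure_of_open this
  · rintro ⟨_, _, _, _, hmul, _⟩ U V hU hV ⟨hxU, hxV⟩
    have hCU : closure U ∈ {F : Set X | IsRegClosed F ∧ x ∈ F} :=
      ⟨regClosed_closure_of_open hU, hxU⟩
    have hCV : closure V ∈ {F : Set X | IsRegClosed F ∧ x ∈ F} :=
      ⟨regClosed_closure_of_open hV, hxV⟩
    have hx := (hmul _ _ hCU hCV).2
    refine closure_minimal ?_ isClosed_closure hx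
    -- interior (closure U ∩ closure V) ⊆ closure (U ∩ V)
    intro y hy
    set W := interior (closure U ∩ closure V) with hW
    have hWo : IsOpen W := isOpen_interior
    have h1 : W ⊆ closure (W ∩ U) := by
      have : W ⊆ closure U := fun z hz => (interior_subset hz).1
      intro z hz
      have hsub : W ∩ closure U ⊆ closure (W ∩ U) := hWo.inter_closure
      exact hsub ⟨hz, ‹W ⊆ closure U› hz⟩
    have h2 : W ∩ U ⊆ closure (U ∩ V) := by
      intro z hz
      have hzV : z ∈ closure V := (interior_subset hz.1).2
      have hsub : (W ∩ U) ∩ closure V ⊆ closure ((W ∩ U) ∩ V) :=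
        (hWo.inter hU).inter_closure
      have hmono : ((W ∩ U) ∩ V : Set X) ⊆ U ∩ V := fun w hw => ⟨hw.1.2, hw.2⟩
      exact closure_mono hmono (hsub ⟨hz, hzV⟩)
    have := closure_mono h2 (h1 hy)
    rwa [closure_closure] at this
end

section
/- Let X and Y be topological spaces, f: X → Y a continuous open map, and x ∈ X an u-point of X. Then f(x) is an u-point of Y. -/
lemma mem_closure_preimage {X Y : Type*} [TopologicalSpace X] [TopologicalSpace Y]
    {f : X → Y} (hopen : IsOpenMap f) {x : X} {U : Set Y}
    (h : f x ∈ closure U) : x ∈ closure (f ⁻¹' U) := by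
  rw [mem_closure_iff] at h ⊢
  intro W hW hxW
  obtain ⟨y, ⟨⟨z, hzW, rfl⟩, hyU⟩⟩ := h (f '' W) (hopen W hW) ⟨x, hxW, rfl⟩
  exact ⟨z, hzW, hyU⟩

/-- A continuous open map sends u-points to u-points. -/
theorem stmt18 {X Y : Type*} [TopologicalSpace X] [TopologicalSpace Y]
    (f : X → Y) (hf : Continuous f) (hopen : IsOpenMap f)
    (x : X) (hx : IsUPoint x) : IsUPoint (f x) := by
  intro U V hU hV ⟨h1, h2⟩
  have := hx (f ⁻¹' U) (f ⁻¹' V) (hU.preimage hf) (hV.preimage hf)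
    ⟨mem_closure_preimage hopen h1, mem_closure_preimage hopen h2⟩
  have h3 : x ∈ closure (f ⁻¹' (U ∩ V)) := by simpa [Set.preimage_inter] using this
  have := (Continuous.closure_preimage_subset hf _) h3
  exact this
end

section
/- Let X be a dense subspace of a topological space Y and x ∈ X. Then x is an u-point of Y if and only if x is an u-point of X. -/
lemma aux_closure_sub {Y : Type*} [TopologicalSpace Y] {X₀ : Set Y} (hd : Dense X₀)
    {U : Set Y} (hU : IsOpen U) {x : X₀} (hx : (x : Y) ∈ closure U) :
    x ∈ closure ((↑) ⁻¹' U : Set X₀) := by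
  rw [mem_closure_iff]
  intro W hW hxW
  obtain ⟨W', hW', rfl⟩ := isOpen_induced_iff.mp hW
  have h1 : (W' ∩ U).Nonempty := by
    rw [mem_closure_iff] at hx
    exact hx W' hW' hxW
  obtain ⟨y, hy⟩ := hd.inter_open_nonempty _ (hW'.inter hU) h1
  exact ⟨⟨y, hy.2⟩, hy.1.1, hy.1.2⟩

/-- For X dense in Y and x ∈ X: x is an u-point of Y iff x is an u-point of the
subspace X. -/
theorem stmt19 {Y : Type*} [TopologicalSpace Y] (X₀ : Set Y) (hd : Dense X₀)
    (x : X₀) : IsUPoint (x : Y) ↔ IsUPoint x := by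
  constructor
  · intro h U V hU hV ⟨hxU, hxV⟩
    obtain ⟨U', hU', rfl⟩ := isOpen_induced_iff.mp hU
    obtain ⟨V', hV', rfl⟩ := isOpen_induced_iff.mp hV
    have hU'c : (x : Y) ∈ closure U' :=
      continuous_subtype_val.closure_preimage_subset U' hxU
    have hV'c : (x : Y) ∈ closure V' :=
      continuous_subtype_val.closure_preimage_subset V' hxV
    have := h U' V' hU' hV' ⟨hU'c, hV'c⟩
    have := aux_closure_sub hd (hU'.inter hV') this
    simpa [Set.preimage_inter] using this
  · intro h U V hU hV ⟨hxU, hxV⟩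
    have h1 := aux_closure_sub hd hU hxU
    have h2 := aux_closure_sub hd hV hxV
    have h3 := h _ _ (hU.preimage continuous_subtype_val)
      (hV.preimage continuous_subtype_val) ⟨h1, h2⟩
    have h4 : x ∈ closure ((↑) ⁻¹' (U ∩ V) : Set X₀) := by
      simpa [Set.preimage_inter] using h3
    exact continuous_subtype_val.closure_preimage_subset _ h4
end
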